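/- Let L = L₀ ⊕ L₁ be a non-degenerate naturally graded Leibniz superalgebra over ℂ with super-nilindex (n,2) where n ≥ 3. Then n = 3, and L is isomorphic to exactly one of the following two non-isomorphic Leibniz superalgebras on a basis {X₁,X₂,X₃,Y₁,Y₂}: μ₂ with nonzero products [X_i,X₁] = X_{i+1} for 1 ≤ i ≤ 2, [Y₁,X₁] = Y₂, [Y₁,Y₁] = X₂, [Y₂,Y₁] = X₃; or μ₃ with nonzero products [X_i,X₁] = X_{i+1} for 1 ≤ i ≤ 2, [X₁,Y₁] = −Y₂, [Y₁,X₁] = Y₂, [Y₁,Y₁] = X₂, [Y₁,Y₂] = X₃. -/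

import Mathlib

/-!
Split each filtration `C^k(L_a) = W a (k+1) ⊕ C^{k+1}(L_a)` compatibly with the product. Maximal
super-nilindex makes every `W a k` a line, and since `C^{k+1}(L_a)` is spanned modulo
`C^{k+2}(L_a)` by `[W a (k+1), W 0 1]`, right multiplication by a generator `X` of `W 0 1` carries
each line onto the next. So `L₀` has the basis `X, [X,X], [[X,X],X], …` and `L₁` the basis
`Y, [Y,X]`, and degree considerations leave four unknown scalars:
`[X,Y] = b[Y,X]`, `[Y,Y] = e[X,X]`, `[Y,[Y,X]] = f[[X,X],X]`, `[[Y,X],Y] = g[[X,X],X]`.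
The super Leibniz identity gives `f = e - g`, `bf = g - e`, `bg = 0`. For `n ≥ 4` three more
instances of it in degree four force `e = f = g = 0` and `[[Y,X],[Y,X]] = 0`, contradicting
non-degeneracy. For `n = 3` non-degeneracy gives `e ≠ 0`; rescaling `Y` makes `e = 1`, and then
`b = 0` yields `μ₂` while `b ≠ 0` forces `b = -1` and yields `μ₃`. The two are not
isomorphic because `[L₀, L₁] = 0` holds in `μ₂` only.
-/

/-- The sign `(-1)^(j·k)` for parities `j k : ZMod 2`, as a complex scalar. -/
def ssign (i j : ZMod 2) : ℂ := if i = 1 ∧ j = 1 then -1 else 1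

/-- A (complex) Leibniz superalgebra structure on the vector space `V`: a ℤ₂-grading
`g` whose parts are complementary, together with an even bilinear product satisfying
the super Leibniz identity
`[x,[y,z]] = [[x,y],z] − (−1)^{|y||z|}[[x,z],y]` for homogeneous `y, z`. -/
structure LeibnizSuperAlg (V : Type*) [AddCommGroup V] [Module ℂ V] where
  g : ZMod 2 → Submodule ℂ V
  bk : V →ₗ[ℂ] V →ₗ[ℂ] V
  compl : IsCompl (g 0) (g 1)
  grading : ∀ i j : ZMod 2, ∀ x ∈ g i, ∀ y ∈ g j, bk x y ∈ g (i + j)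
  leibniz : ∀ j k : ZMod 2, ∀ x : V, ∀ y ∈ g j, ∀ z ∈ g k,
    bk x (bk y z) = bk (bk x y) z - ssign j k • bk (bk x z) y

namespace LeibnizSuperAlg

variable {V : Type*} [AddCommGroup V] [Module ℂ V]

/-- The descending sequences `C⁰(L_i) = L_i`, `C^{k+1}(L_i) = [C^k(L_i), L₀]`. -/
def C (A : LeibnizSuperAlg V) (i : ZMod 2) : ℕ → Submodule ℂ V
  | 0 => A.g i
  | k + 1 => Submodule.span ℂ {z | ∃ x ∈ C A i k, ∃ y ∈ A.g 0, z = A.bk x y}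

/-- The descending central sequence of the whole superalgebra. -/
def DC (A : LeibnizSuperAlg V) : ℕ → Submodule ℂ V
  | 0 => ⊤
  | k + 1 => Submodule.span ℂ {z | ∃ x ∈ DC A k, ∃ y : V, z = A.bk x y}

/-- Nilpotency: the descending central sequence reaches zero. -/
def IsNilpotent (A : LeibnizSuperAlg V) : Prop := ∃ k, A.DC k = ⊥

/-- `A` is nilpotent with `dim L₀ = n`, `dim L₁ = m` and super-nilindex `(n, m)`
(the maximal possible value). -/
def HasMaxSNilindex (A : LeibnizSuperAlg V) (n m : ℕ) : Prop :=
  A.IsNilpotent ∧ Module.finrank ℂ (A.g 0) = n ∧ Module.finrank ℂ (A.g 1) = m ∧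
    A.C 0 (n - 1) ≠ ⊥ ∧ A.C 1 (m - 1) ≠ ⊥ ∧ A.C 0 n = ⊥ ∧ A.C 1 m = ⊥

/-- Non-degeneracy: the product does not vanish identically on `L₁ × L₁`. -/
def NonDegenerate (A : LeibnizSuperAlg V) : Prop :=
  ∃ x ∈ A.g 1, ∃ y ∈ A.g 1, A.bk x y ≠ 0

/-- `A` is naturally graded: there are subspaces `W a i` (`i ≥ 1`, parity `a`), splitting
the filtrations `C` (so that `W a i ≅ C^{i-1}(L_a)/C^i(L_a)` and `L ≅ gr(L)` in the
natural way) and compatible with the product (so `gr(L)` is a graded Leibniz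
superalgebra, `[Lⁱ, Lʲ] ⊆ L^{i+j}`).  For finite-dimensional nilpotent superalgebras
this is equivalent to the textbook definition `L ≅ gr(L)` with `gr(L)` graded. -/
def NaturallyGraded (A : LeibnizSuperAlg V) : Prop :=
  ∃ W : ZMod 2 → ℕ → Submodule ℂ V,
    (∀ a, W a 0 = ⊥) ∧
    (∀ a k, A.C a k = W a (k + 1) ⊔ A.C a (k + 1)) ∧
    (∀ a k, W a (k + 1) ⊓ A.C a (k + 1) = ⊥) ∧
    (∀ a b : ZMod 2, ∀ i j : ℕ, ∀ x ∈ W a i, ∀ y ∈ W b j, A.bk x y ∈ W (a + b) (i + j))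

/-- `X 1, …, X n` and `Y 1, …, Y m` form an adapted basis of the superalgebra:
the `X i` are even, the `Y j` are odd, and together they form a basis of `V`. -/
def IsAdaptedBasis (A : LeibnizSuperAlg V) (n m : ℕ) (X Y : ℕ → V) : Prop :=
  (∀ i, 1 ≤ i → i ≤ n → X i ∈ A.g 0) ∧ (∀ j, 1 ≤ j → j ≤ m → Y j ∈ A.g 1) ∧
  LinearIndependent ℂ
    (Sum.elim (fun i : Fin n => X (i.val + 1)) (fun j : Fin m => Y (j.val + 1))) ∧
  Submodule.span ℂ
    (Set.range (Sum.elim (fun i : Fin n => X (i.val + 1)) (fun j : Fin m => Y (j.val + 1)))) = ⊤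

end LeibnizSuperAlg

/-- The Leibniz superalgebra `μ₂` of super-nilindex `(3,2)`. -/
def LawMu2 {V : Type*} [AddCommGroup V] [Module ℂ V] (A : LeibnizSuperAlg V) : Prop :=
  ∃ X Y : ℕ → V, A.IsAdaptedBasis 3 2 X Y ∧
    (∀ i j : ℕ, 1 ≤ i → i ≤ 3 → 1 ≤ j → j ≤ 3 → A.bk (X i) (X j) =
      if j = 1 ∧ 1 ≤ i ∧ i ≤ 2 then X (i + 1) else 0) ∧
    (∀ i j : ℕ, 1 ≤ i → i ≤ 3 → 1 ≤ j → j ≤ 2 → A.bk (X i) (Y j) =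
      0) ∧
    (∀ i j : ℕ, 1 ≤ i → i ≤ 2 → 1 ≤ j → j ≤ 3 → A.bk (Y i) (X j) =
      if i = 1 ∧ j = 1 then Y 2 else 0) ∧
    (∀ i j : ℕ, 1 ≤ i → i ≤ 2 → 1 ≤ j → j ≤ 2 → A.bk (Y i) (Y j) =
      if j = 1 ∧ i ≤ 2 then X (i + 1) else 0)

/-- The Leibniz superalgebra `μ₃` of super-nilindex `(3,2)`. -/
def LawMu3 {V : Type*} [AddCommGroup V] [Module ℂ V] (A : LeibnizSuperAlg V) : Prop :=
  ∃ X Y : ℕ → V, A.IsAdaptedBasis 3 2 X Y ∧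
    (∀ i j : ℕ, 1 ≤ i → i ≤ 3 → 1 ≤ j → j ≤ 3 → A.bk (X i) (X j) =
      if j = 1 ∧ 1 ≤ i ∧ i ≤ 2 then X (i + 1) else 0) ∧
    (∀ i j : ℕ, 1 ≤ i → i ≤ 3 → 1 ≤ j → j ≤ 2 → A.bk (X i) (Y j) =
      if i = 1 ∧ j = 1 then -Y 2 else 0) ∧
    (∀ i j : ℕ, 1 ≤ i → i ≤ 2 → 1 ≤ j → j ≤ 3 → A.bk (Y i) (X j) =
      if i = 1 ∧ j = 1 then Y 2 else 0) ∧
    (∀ i j : ℕ, 1 ≤ i → i ≤ 2 → 1 ≤ j → j ≤ 2 → A.bk (Y i) (Y j) =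
      if i = 1 ∧ j = 1 then X 2 else if i = 1 ∧ j = 2 then X 3 else 0)

theorem Nat.eq_sub_of_apply_succ_lt {f : ℕ → ℕ} {m : ℕ} (h0 : f 0 = m)
    (hlt : ∀ k < m, f (k + 1) < f k) : ∀ k ≤ m, f k = m - k := by
  have upper : ∀ k ≤ m, f k ≤ m - k := by
    intro k
    induction k with
    | zero => simp [h0]
    | succ k ih =>
      intro hk
      have := hlt k (by omega)
      have := ih (by omega)
      omega
  have lower : ∀ d k, k + d = m → d ≤ f k := by
    intro d
    induction d with
    | zero => simp
    | succ d ih =>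
      intro k hk
      have := ih (k + 1) (by omega)
      have := hlt k (by omega)
      omega
  exact fun k hk => le_antisymm (upper k hk) (lower (m - k) k (by omega))

theorem Submodule.eq_span_singleton_of_finrank_eq_one {K V : Type*} [Field K] [AddCommGroup V]
    [Module K V] {S : Submodule K V} [FiniteDimensional K S] (hS : Module.finrank K S = 1)
    {x : V} (hx : x ∈ S) (hx0 : x ≠ 0) : S = K ∙ x :=
  (Submodule.eq_of_le_of_finrank_le ((Submodule.span_singleton_le_iff_mem x S).2 hx)
    (by rw [finrank_span_singleton hx0, hS])).symm

theorem LinearIndependent.span_range_eq_of_finrank_eq {K V ι : Type*} [Field K] [AddCommGroup V]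
    [Module K V] [FiniteDimensional K V] [Fintype ι] {v : ι → V} (hv : LinearIndependent K v)
    {S : Submodule K V} (hvS : ∀ i, v i ∈ S) (hS : Module.finrank K S = Fintype.card ι) :
    Submodule.span K (Set.range v) = S :=
  Submodule.eq_of_le_of_finrank_eq (Submodule.span_le.2 (Set.range_subset_iff.2 hvS))
    (by rw [finrank_span_eq_card hv, hS])

namespace LeibnizSuperAlg

variable {V : Type*} [AddCommGroup V] [Module ℂ V] (A : LeibnizSuperAlg V)

theorem leibniz_of_even_right (x : V) {j : ZMod 2} {y z : V} (hy : y ∈ A.g j) (hz : z ∈ A.g 0) :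
    A.bk x (A.bk y z) = A.bk (A.bk x y) z - A.bk (A.bk x z) y := by
  simpa [ssign] using A.leibniz j 0 x y hy z hz

theorem leibniz_of_even_left (x : V) {k : ZMod 2} {y z : V} (hy : y ∈ A.g 0) (hz : z ∈ A.g k) :
    A.bk x (A.bk y z) = A.bk (A.bk x y) z - A.bk (A.bk x z) y := by
  simpa [ssign] using A.leibniz 0 k x y hy z hz

theorem leibniz_of_odd (x : V) {y z : V} (hy : y ∈ A.g 1) (hz : z ∈ A.g 1) :
    A.bk x (A.bk y z) = A.bk (A.bk x y) z + A.bk (A.bk x z) y := by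
  simpa [ssign] using A.leibniz 1 1 x y hy z hz

theorem bk_bk_self_self_of_even {x : V} (hx : x ∈ A.g 0) : A.bk x (A.bk x x) = 0 := by
  simpa using A.leibniz_of_even_left x hx hx

theorem relations_in_degree_three {x y : V} (hx : x ∈ A.g 0) (hy : y ∈ A.g 1) {b e f g : ℂ}
    (hb : A.bk x y = b • A.bk y x) (he : A.bk y y = e • A.bk x x)
    (hf : A.bk y (A.bk y x) = f • A.bk (A.bk x x) x)
    (hg : A.bk (A.bk y x) y = g • A.bk (A.bk x x) x) (h3 : A.bk (A.bk x x) x ≠ 0) :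
    f = e - g ∧ b * f = g - e ∧ b * g = 0 := by
  have hyyx := A.leibniz_of_even_right y hy hx
  have hyxy := A.leibniz_of_even_left y hx hy
  have hxyy := A.leibniz_of_odd x hy hy
  rw [hf, he, hg, map_smul, LinearMap.smul_apply] at hyyx
  rw [hb, map_smul, hf, hg, he, map_smul, LinearMap.smul_apply, smul_smul] at hyxy
  rw [he, map_smul, A.bk_bk_self_self_of_even hx, smul_zero, hb, map_smul, LinearMap.smul_apply,
    hg, smul_smul] at hxyy
  refine ⟨smul_left_injective ℂ h3 ?_, smul_left_injective ℂ h3 ?_, ?_⟩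
  · simp only [sub_smul]
    exact hyyx
  · simp only [sub_smul]
    exact hyxy
  · have h : (2 * (b * g)) • A.bk (A.bk x x) x = 0 := by rw [two_mul, add_smul, ← hxyy]
    simpa [h3] using h

theorem relations_in_degree_four {x y : V} (hx : x ∈ A.g 0) (hy : y ∈ A.g 1) {b f g q : ℂ}
    (hb : A.bk x y = b • A.bk y x) (hf : A.bk y (A.bk y x) = f • A.bk (A.bk x x) x)
    (hg : A.bk (A.bk y x) y = g • A.bk (A.bk x x) x) (hyxx : A.bk (A.bk y x) x = 0)
    (hq : A.bk (A.bk y x) (A.bk y x) = q • A.bk (A.bk (A.bk x x) x) x)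
    (h4 : A.bk (A.bk (A.bk x x) x) x ≠ 0) :
    q = g ∧ b * q = -g ∧ f = q := by
  have hz : A.bk y x ∈ A.g 1 := by simpa using A.grading 1 0 y hy x hx
  have hzyx := A.leibniz_of_even_right (A.bk y x) hy hx
  have hzxy := A.leibniz_of_even_left (A.bk y x) hx hy
  have hyzx := A.leibniz_of_even_right y hz hx
  rw [hq, hg, hyxx, map_smul, LinearMap.smul_apply, LinearMap.map_zero₂, sub_zero] at hzyx
  rw [hb, map_smul, hq, hyxx, LinearMap.map_zero₂, hg, map_smul, LinearMap.smul_apply, zero_sub,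
    smul_smul] at hzxy
  rw [hyxx, map_zero, hf, hq, map_smul, LinearMap.smul_apply] at hyzx
  refine ⟨smul_left_injective ℂ h4 hzyx, smul_left_injective ℂ h4 ?_,
    smul_left_injective ℂ h4 (sub_eq_zero.1 hyzx.symm)⟩
  simp only [neg_smul]
  exact hzxy

theorem bk_eq_zero_of_mem_span {s t : Set V} (hst : ∀ u ∈ s, ∀ v ∈ t, A.bk u v = 0)
    {x y : V} (hx : x ∈ Submodule.span ℂ s) (hy : y ∈ Submodule.span ℂ t) :
    A.bk x y = 0 := by
  have hbot : Submodule.map₂ A.bk (Submodule.span ℂ s) (Submodule.span ℂ t) = ⊥ := by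
    rw [Submodule.map₂_span_span, Submodule.span_eq_bot]
    rintro _ ⟨u, hu, v, hv, rfl⟩
    exact hst u hu v hv
  simpa [hbot] using Submodule.apply_mem_map₂ A.bk hx hy

theorem NonDegenerate.bk_ne_zero_of_g_one_eq {A : LeibnizSuperAlg V} (hnd : A.NonDegenerate)
    {u v : V} (hs : A.g 1 = Submodule.span ℂ {u, v}) :
    A.bk u u ≠ 0 ∨ A.bk u v ≠ 0 ∨ A.bk v u ≠ 0 ∨ A.bk v v ≠ 0 := by
  obtain ⟨x, hx, y, hy, hxy⟩ := hnd
  by_contra! h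
  refine hxy (A.bk_eq_zero_of_mem_span ?_ (hs ▸ hx) (hs ▸ hy))
  simp only [Set.mem_insert_iff, Set.mem_singleton_iff]
  rintro _ (rfl | rfl) _ (rfl | rfl) <;> simp [h]

theorem bk_mem_C_succ {a : ZMod 2} {k : ℕ} {x y : V} (hx : x ∈ A.C a k) (hy : y ∈ A.g 0) :
    A.bk x y ∈ A.C a (k + 1) :=
  Submodule.subset_span ⟨x, hx, y, hy, rfl⟩

theorem C_succ_le (a : ZMod 2) : ∀ k, A.C a (k + 1) ≤ A.C a k
  | 0 => Submodule.span_le.2 <| by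
    rintro _ ⟨x, hx, y, hy, rfl⟩
    simpa [C] using A.grading a 0 x hx y hy
  | k + 1 => Submodule.span_le.2 <| by
    rintro _ ⟨x, hx, y, hy, rfl⟩
    exact A.bk_mem_C_succ (C_succ_le a k hx) hy

theorem C_antitone (a : ZMod 2) : Antitone (A.C a) :=
  antitone_nat_of_succ_le (A.C_succ_le a)

theorem C_add_eq_of_succ_eq {a : ZMod 2} {k : ℕ} (h : A.C a (k + 1) = A.C a k) :
    ∀ j, A.C a (k + j) = A.C a k
  | 0 => rfl
  | j + 1 => by
    rw [← add_assoc, C, C_add_eq_of_succ_eq h j]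
    exact h

structure HasMaxNilindexAt (a : ZMod 2) (m : ℕ) : Prop where
  finrank_eq : Module.finrank ℂ (A.g a) = m
  C_pred_ne_bot : A.C a (m - 1) ≠ ⊥
  C_eq_bot : A.C a m = ⊥

theorem HasMaxSNilindex.even {A : LeibnizSuperAlg V} {n m : ℕ} (h : A.HasMaxSNilindex n m) :
    A.HasMaxNilindexAt 0 n :=
  ⟨h.2.1, h.2.2.2.1, h.2.2.2.2.2.1⟩

theorem HasMaxSNilindex.odd {A : LeibnizSuperAlg V} {n m : ℕ} (h : A.HasMaxSNilindex n m) :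
    A.HasMaxNilindexAt 1 m :=
  ⟨h.2.2.1, h.2.2.2.2.1, h.2.2.2.2.2.2⟩

namespace HasMaxNilindexAt

variable {A} {a : ZMod 2} {m : ℕ} (h : A.HasMaxNilindexAt a m)
include h

theorem C_succ_lt {k : ℕ} (hk : k < m) : A.C a (k + 1) < A.C a k := by
  refine lt_of_le_of_ne (A.C_succ_le a k) fun heq => h.C_pred_ne_bot (eq_bot_iff.2 ?_)
  calc A.C a (m - 1) ≤ A.C a k := A.C_antitone a (by omega)
    _ = A.C a (k + (m - k)) := (A.C_add_eq_of_succ_eq heq _).symm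
    _ = ⊥ := by rw [Nat.add_sub_cancel' hk.le, h.C_eq_bot]

theorem finrank_C [FiniteDimensional ℂ V] {k : ℕ} (hk : k ≤ m) :
    Module.finrank ℂ (A.C a k) = m - k :=
  Nat.eq_sub_of_apply_succ_lt (f := fun k => Module.finrank ℂ (A.C a k)) h.finrank_eq
    (fun _ hk => Submodule.finrank_lt_finrank_of_lt (h.C_succ_lt hk)) k hk

end HasMaxNilindexAt

structure IsGradedSplitting (W : ZMod 2 → ℕ → Submodule ℂ V) : Prop where
  C_eq_sup : ∀ a k, A.C a k = W a (k + 1) ⊔ A.C a (k + 1)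
  inf_C_eq_bot : ∀ a k, W a (k + 1) ⊓ A.C a (k + 1) = ⊥
  bk_mem : ∀ a b : ZMod 2, ∀ i j : ℕ, ∀ x ∈ W a i, ∀ y ∈ W b j,
    A.bk x y ∈ W (a + b) (i + j)

theorem NaturallyGraded.exists_isGradedSplitting {A : LeibnizSuperAlg V} (h : A.NaturallyGraded) :
    ∃ W, A.IsGradedSplitting W :=
  let ⟨W, _, hsup, hinf, hbk⟩ := h
  ⟨W, ⟨hsup, hinf, hbk⟩⟩

namespace IsGradedSplitting

variable {A} {W : ZMod 2 → ℕ → Submodule ℂ V} (hW : A.IsGradedSplitting W)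
include hW

theorem W_le_C (a : ZMod 2) (k : ℕ) : W a (k + 1) ≤ A.C a k :=
  hW.C_eq_sup a k ▸ le_sup_left

theorem W_le_g (a : ZMod 2) (k : ℕ) : W a (k + 1) ≤ A.g a :=
  (hW.W_le_C a k).trans (A.C_antitone a k.zero_le)

theorem finrank_C_eq_add [FiniteDimensional ℂ V] (a : ZMod 2) (k : ℕ) :
    Module.finrank ℂ (A.C a k) =
      Module.finrank ℂ (W a (k + 1)) + Module.finrank ℂ (A.C a (k + 1)) := by
  have := Submodule.finrank_sup_add_finrank_inf_eq (W a (k + 1)) (A.C a (k + 1))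
  rwa [hW.inf_C_eq_bot, ← hW.C_eq_sup, finrank_bot, add_zero] at this

theorem finrank_W_eq_one [FiniteDimensional ℂ V] {a : ZMod 2} {m : ℕ}
    (h : A.HasMaxNilindexAt a m) {k : ℕ} (hk : k < m) : Module.finrank ℂ (W a (k + 1)) = 1 := by
  have := hW.finrank_C_eq_add a k
  rw [h.finrank_C hk.le, h.finrank_C hk] at this
  omega

theorem exists_mem_W_ne_zero [FiniteDimensional ℂ V] {a : ZMod 2} {m : ℕ}
    (h : A.HasMaxNilindexAt a m) {k : ℕ} (hk : k < m) : ∃ x ∈ W a (k + 1), x ≠ 0 :=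
  Submodule.exists_mem_ne_zero_of_ne_bot fun hbot => by
    have := hW.finrank_W_eq_one h hk
    rw [hbot, finrank_bot] at this
    exact zero_ne_one this

theorem W_eq_span_of_mem [FiniteDimensional ℂ V] {a : ZMod 2} {m : ℕ}
    (h : A.HasMaxNilindexAt a m) {k : ℕ} (hk : k < m) {x : V} (hx : x ∈ W a (k + 1))
    (hx0 : x ≠ 0) : W a (k + 1) = ℂ ∙ x :=
  Submodule.eq_span_singleton_of_finrank_eq_one (hW.finrank_W_eq_one h hk) hx hx0

theorem bk_mem_W_succ {a : ZMod 2} {k : ℕ} {x X : V} (hx : x ∈ W a (k + 1)) (hX : X ∈ W 0 1) :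
    A.bk x X ∈ W a (k + 2) := by
  simpa using hW.bk_mem a 0 (k + 1) 1 x hx X hX

theorem W_eq_bot {a : ZMod 2} {N s : ℕ} (hN : A.C a N = ⊥) (hs : N < s) : W a s = ⊥ := by
  obtain ⟨k, rfl⟩ := Nat.exists_eq_add_of_lt hs
  exact eq_bot_iff.2 <| (hW.W_le_C a (N + k)).trans (hN ▸ A.C_antitone a (N.le_add_right k))

theorem bk_eq_zero {a b : ZMod 2} {i j : ℕ} {x y : V} (hx : x ∈ W a i) (hy : y ∈ W b j)
    {N : ℕ} (hN : A.C (a + b) N = ⊥) (hij : N < i + j) : A.bk x y = 0 := by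
  simpa [hW.W_eq_bot hN hij] using hW.bk_mem a b i j x hx y hy

theorem C_le_of_forall_W_le {a : ZMod 2} {N : ℕ} (hN : A.C a N = ⊥) {S : Submodule ℂ V}
    {k : ℕ} (hS : ∀ i, k ≤ i → i < N → W a (i + 1) ≤ S) : A.C a k ≤ S := by
  induction hd : N - k generalizing k with
  | zero => exact (A.C_antitone a (show N ≤ k by omega)).trans (hN ▸ bot_le)
  | succ d ih =>
    rw [hW.C_eq_sup a k]
    exact sup_le (hS k le_rfl (by omega)) (ih (fun i hi => hS i (by omega)) (by omega))

theorem bk_mem_C {a b : ZMod 2} {N i m : ℕ} (hN : A.C b N = ⊥) {x y : V} (hx : x ∈ W a i)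
    (hy : y ∈ A.C b m) : A.bk x y ∈ A.C (a + b) (i + m) := by
  refine hW.C_le_of_forall_W_le hN (S := (A.C (a + b) (i + m)).comap (A.bk x)) ?_ hy
  intro j hj _ w hw
  exact A.C_antitone _ (by omega) (hW.W_le_C _ (i + j) (hW.bk_mem a b i (j + 1) x hx w hw))

theorem C_succ_le_map₂_sup {N : ℕ} (hN : A.C 0 N = ⊥) (a : ZMod 2) (k : ℕ) :
    A.C a (k + 1) ≤ Submodule.map₂ A.bk (W a (k + 1)) (W 0 1) ⊔ A.C a (k + 2) := by
  refine Submodule.span_le.2 ?_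
  rintro _ ⟨u, hu, y, hy, rfl⟩
  obtain ⟨w, hw, u', hu', rfl⟩ := Submodule.mem_sup.1 (hW.C_eq_sup a k ▸ hu)
  have hy_dec : y ∈ W 0 1 ⊔ A.C 0 1 := by rw [← hW.C_eq_sup 0 0]; exact hy
  obtain ⟨v, hv, y', hy', rfl⟩ := Submodule.mem_sup.1 hy_dec
  have hwy' : A.bk w y' ∈ A.C a (k + 2) := by simpa using hW.bk_mem_C hN hw hy'
  have hsplit : A.bk (w + u') (v + y') = A.bk w v + (A.bk w y' + A.bk u' (v + y')) := by
    simp only [map_add, LinearMap.add_apply]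
    abel
  rw [SetLike.mem_coe, hsplit]
  exact Submodule.add_mem_sup (Submodule.apply_mem_map₂ _ hw hv)
    (add_mem hwy' (A.bk_mem_C_succ hu' hy))

theorem bk_ne_zero [FiniteDimensional ℂ V] {N : ℕ} (hN : A.C 0 N = ⊥) {a : ZMod 2} {m : ℕ}
    (h : A.HasMaxNilindexAt a m) {X : V} (hX : W 0 1 = ℂ ∙ X) {k : ℕ} (hk : k + 2 ≤ m)
    {x : V} (hx : x ∈ W a (k + 1)) (hx0 : x ≠ 0) : A.bk x X ≠ 0 := by
  intro h0
  have hle := hW.C_succ_le_map₂_sup hN a k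
  rw [hX, hW.W_eq_span_of_mem h (by omega) hx hx0, Submodule.map₂_span_span, Set.image2_singleton,
    h0, Submodule.span_zero_singleton, bot_sup_eq] at hle
  exact (h.C_succ_lt (k := k + 1) (by omega)).not_ge hle

theorem forall_bk_eq_of_low_degree {a b : ZMod 2} {p r N : ℕ} {x y : ℕ → V}
    (hx : ∀ i, 1 ≤ i → i ≤ p → x i ∈ W a i)
    (hy : ∀ j, 1 ≤ j → j ≤ r → y j ∈ W b j)
    (hN : A.C (a + b) N = ⊥) {T : ℕ → ℕ → V}
    (hlarge : ∀ i j, i ≤ p → j ≤ r → N < i + j → T i j = 0)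
    (hsmall : ∀ i j, 1 ≤ i → 1 ≤ j → i + j ≤ N → A.bk (x i) (y j) = T i j) :
    ∀ i j, 1 ≤ i → i ≤ p → 1 ≤ j → j ≤ r → A.bk (x i) (y j) = T i j := by
  intro i j hi hip hj hjr
  rcases le_or_gt (i + j) N with hij | hij
  · exact hsmall i j hi hj hij
  · rw [hlarge i j hip hjr hij]
    exact hW.bk_eq_zero (hx i hi hip) (hy j hj hjr) hN hij

theorem isAdaptedBasis [FiniteDimensional ℂ V] {n m : ℕ} (h0 : A.HasMaxNilindexAt 0 n)
    (h1 : A.HasMaxNilindexAt 1 m) {x y : ℕ → V}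
    (hx : ∀ i < n, W 0 (i + 1) = ℂ ∙ x (i + 1))
    (hy : ∀ j < m, W 1 (j + 1) = ℂ ∙ y (j + 1)) :
    A.IsAdaptedBasis n m x y := by
  set v := Sum.elim (fun i : Fin n => x (i.val + 1)) (fun j : Fin m => y (j.val + 1))
  have hmem : ∀ {a : ZMod 2} {k : ℕ} {z : V}, W a (k + 1) = ℂ ∙ z → z ∈ A.g a :=
    fun hz => hW.W_le_g _ _ (hz ▸ Submodule.mem_span_singleton_self _)
  have hg0 : A.g 0 ≤ Submodule.span ℂ (Set.range v) :=
    hW.C_le_of_forall_W_le h0.C_eq_bot (k := 0) fun i _ hi => (hx i hi).symm ▸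
      (Submodule.span_singleton_le_iff_mem _ _).2
        (Submodule.subset_span ⟨Sum.inl ⟨i, hi⟩, rfl⟩)
  have hg1 : A.g 1 ≤ Submodule.span ℂ (Set.range v) :=
    hW.C_le_of_forall_W_le h1.C_eq_bot (k := 0) fun j _ hj => (hy j hj).symm ▸
      (Submodule.span_singleton_le_iff_mem _ _).2
        (Submodule.subset_span ⟨Sum.inr ⟨j, hj⟩, rfl⟩)
  have htop : Submodule.span ℂ (Set.range v) = ⊤ :=
    eq_top_iff.2 (A.compl.sup_eq_top ▸ sup_le hg0 hg1)
  refine ⟨fun i hi hin => ?_, fun j hj hjm => ?_,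
    linearIndependent_of_top_le_span_of_card_eq_finrank htop.ge ?_, htop⟩
  · obtain ⟨k, rfl⟩ : ∃ k, i = k + 1 := ⟨i - 1, by omega⟩
    exact hmem (hx k (by omega))
  · obtain ⟨k, rfl⟩ : ∃ k, j = k + 1 := ⟨j - 1, by omega⟩
    exact hmem (hy k (by omega))
  · rw [← Submodule.finrank_add_eq_of_isCompl A.compl, h0.finrank_eq, h1.finrank_eq]
    simp

end IsGradedSplitting

def stdEvenBasis (X : V) : ℕ → V
  | 1 => X
  | 2 => A.bk X X
  | 3 => A.bk (A.bk X X) X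
  | _ => 0

def stdOddBasis (X Y : V) : ℕ → V
  | 1 => Y
  | 2 => A.bk Y X
  | _ => 0

structure IsStandardPair (W : ZMod 2 → ℕ → Submodule ℂ V) (X Y : V) : Prop where
  W_even_one : W 0 1 = ℂ ∙ X
  W_even_two : W 0 2 = ℂ ∙ A.bk X X
  W_even_three : W 0 3 = ℂ ∙ A.bk (A.bk X X) X
  W_odd_one : W 1 1 = ℂ ∙ Y
  W_odd_two : W 1 2 = ℂ ∙ A.bk Y X
  bk_bk_ne_zero : A.bk (A.bk X X) X ≠ 0

namespace IsStandardPair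

variable {A} {W : ZMod 2 → ℕ → Submodule ℂ V} {X Y : V} (hp : A.IsStandardPair W X Y)
include hp

theorem mem_W_even_one : X ∈ W 0 1 := hp.W_even_one ▸ Submodule.mem_span_singleton_self X

theorem mem_W_odd_one : Y ∈ W 1 1 := hp.W_odd_one ▸ Submodule.mem_span_singleton_self Y

theorem smul {t : ℂ} (ht : t ≠ 0) : A.IsStandardPair W X (t • Y) where
  W_even_one := hp.W_even_one
  W_even_two := hp.W_even_two
  W_even_three := hp.W_even_three
  W_odd_one := by rw [Submodule.span_singleton_smul_eq ht.isUnit, hp.W_odd_one]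
  W_odd_two := by
    rw [map_smul, LinearMap.smul_apply, Submodule.span_singleton_smul_eq ht.isUnit, hp.W_odd_two]
  bk_bk_ne_zero := hp.bk_bk_ne_zero

theorem g_one_eq (hW : A.IsGradedSplitting W) (h1 : A.C 1 2 = ⊥) :
    A.g 1 = Submodule.span ℂ {Y, A.bk Y X} := by
  rw [Submodule.span_insert, ← hp.W_odd_one, ← hp.W_odd_two]
  change A.C 1 0 = _
  rw [hW.C_eq_sup, hW.C_eq_sup, h1, sup_bot_eq]

theorem exists_structure_constants (hW : A.IsGradedSplitting W) :
    ∃ b e f g : ℂ, A.bk X Y = b • A.bk Y X ∧ A.bk Y Y = e • A.bk X X ∧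
      A.bk Y (A.bk Y X) = f • A.bk (A.bk X X) X ∧
      A.bk (A.bk Y X) Y = g • A.bk (A.bk X X) X ∧
      f = e - g ∧ b * f = g - e ∧ b * g = 0 := by
  have hX := hp.mem_W_even_one
  have hY := hp.mem_W_odd_one
  have hYX := hW.bk_mem_W_succ hY hX
  obtain ⟨b, hb⟩ := Submodule.mem_span_singleton.1
    (hp.W_odd_two ▸ (by simpa using hW.bk_mem 0 1 1 1 X hX Y hY : A.bk X Y ∈ W 1 2))
  -- `(1 + 1 : ZMod 2)` reduces to `0`, so products of odd elements land in `W 0 _` by defeq.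
  obtain ⟨e, he⟩ := Submodule.mem_span_singleton.1
    (hp.W_even_two ▸ hW.bk_mem 1 1 1 1 Y hY Y hY)
  obtain ⟨f, hf⟩ := Submodule.mem_span_singleton.1
    (hp.W_even_three ▸ hW.bk_mem 1 1 1 2 Y hY _ hYX)
  obtain ⟨g, hg⟩ := Submodule.mem_span_singleton.1
    (hp.W_even_three ▸ hW.bk_mem 1 1 2 1 _ hYX Y hY)
  exact ⟨b, e, f, g, hb.symm, he.symm, hf.symm, hg.symm,
    A.relations_in_degree_three (hW.W_le_g 0 0 hX) (hW.W_le_g 1 0 hY) hb.symm he.symm hf.symm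
      hg.symm hp.bk_bk_ne_zero⟩

theorem W_stdEvenBasis : ∀ i < 3, W 0 (i + 1) = ℂ ∙ A.stdEvenBasis X (i + 1) := by
  intro i hi
  interval_cases i
  exacts [hp.W_even_one, hp.W_even_two, hp.W_even_three]

theorem W_stdOddBasis : ∀ j < 2, W 1 (j + 1) = ℂ ∙ A.stdOddBasis X Y (j + 1) := by
  intro j hj
  interval_cases j
  exacts [hp.W_odd_one, hp.W_odd_two]

theorem stdEvenBasis_mem : ∀ i, 1 ≤ i → i ≤ 3 → A.stdEvenBasis X i ∈ W 0 i := by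
  intro i hi hi3
  obtain ⟨k, rfl⟩ : ∃ k, i = k + 1 := ⟨i - 1, by omega⟩
  exact hp.W_stdEvenBasis k (by omega) ▸ Submodule.mem_span_singleton_self _

theorem stdOddBasis_mem : ∀ j, 1 ≤ j → j ≤ 2 → A.stdOddBasis X Y j ∈ W 1 j := by
  intro j hj hj2
  obtain ⟨k, rfl⟩ : ∃ k, j = k + 1 := ⟨j - 1, by omega⟩
  exact hp.W_stdOddBasis k (by omega) ▸ Submodule.mem_span_singleton_self _

theorem bk_stdEvenBasis (hW : A.IsGradedSplitting W) (h0 : A.C 0 3 = ⊥) :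
    ∀ i j : ℕ, 1 ≤ i → i ≤ 3 → 1 ≤ j → j ≤ 3 →
      A.bk (A.stdEvenBasis X i) (A.stdEvenBasis X j) =
      if j = 1 ∧ 1 ≤ i ∧ i ≤ 2 then A.stdEvenBasis X (i + 1) else 0 := by
  refine hW.forall_bk_eq_of_low_degree hp.stdEvenBasis_mem hp.stdEvenBasis_mem h0
    (fun i j _ _ hij => if_neg (by omega)) fun i j hi hj hij => ?_
  obtain ⟨rfl, rfl⟩ | ⟨rfl, rfl⟩ | ⟨rfl, rfl⟩ :
      (i = 1 ∧ j = 1) ∨ (i = 1 ∧ j = 2) ∨ (i = 2 ∧ j = 1) := by omega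
  · simp [stdEvenBasis]
  · simp [stdEvenBasis, A.bk_bk_self_self_of_even (hW.W_le_g 0 0 hp.mem_W_even_one)]
  · simp [stdEvenBasis]

theorem bk_stdOddBasis_stdEvenBasis (hW : A.IsGradedSplitting W) (h1 : A.C 1 2 = ⊥) :
    ∀ i j : ℕ, 1 ≤ i → i ≤ 2 → 1 ≤ j → j ≤ 3 →
      A.bk (A.stdOddBasis X Y i) (A.stdEvenBasis X j) =
        if i = 1 ∧ j = 1 then A.stdOddBasis X Y 2 else 0 := by
  refine hW.forall_bk_eq_of_low_degree hp.stdOddBasis_mem hp.stdEvenBasis_mem h1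
    (fun i j _ _ hij => if_neg (by omega)) fun i j hi hj hij => ?_
  obtain ⟨rfl, rfl⟩ : i = 1 ∧ j = 1 := by omega
  simp [stdEvenBasis, stdOddBasis]

theorem lawMu2 [FiniteDimensional ℂ V] (hW : A.IsGradedSplitting W) (h0 : A.HasMaxNilindexAt 0 3)
    (h1 : A.HasMaxNilindexAt 1 2) (hXY : A.bk X Y = 0) (hYY : A.bk Y Y = A.bk X X)
    (hYY2 : A.bk Y (A.bk Y X) = 0) (hY2Y : A.bk (A.bk Y X) Y = A.bk (A.bk X X) X) : LawMu2 A := by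
  refine ⟨_, _, hW.isAdaptedBasis h0 h1 hp.W_stdEvenBasis hp.W_stdOddBasis,
    hp.bk_stdEvenBasis hW h0.C_eq_bot, ?_, hp.bk_stdOddBasis_stdEvenBasis hW h1.C_eq_bot, ?_⟩
  · refine hW.forall_bk_eq_of_low_degree hp.stdEvenBasis_mem hp.stdOddBasis_mem h1.C_eq_bot
      (fun _ _ _ _ _ => rfl) fun i j hi hj hij => ?_
    obtain ⟨rfl, rfl⟩ : i = 1 ∧ j = 1 := by omega
    exact hXY
  · refine hW.forall_bk_eq_of_low_degree hp.stdOddBasis_mem hp.stdOddBasis_mem h0.C_eq_bot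
      (fun i j _ _ hij => if_neg (by omega)) fun i j hi hj hij => ?_
    obtain ⟨rfl, rfl⟩ | ⟨rfl, rfl⟩ | ⟨rfl, rfl⟩ :
        (i = 1 ∧ j = 1) ∨ (i = 1 ∧ j = 2) ∨ (i = 2 ∧ j = 1) := by omega
    all_goals simp [stdEvenBasis, stdOddBasis, hYY, hYY2, hY2Y]

theorem lawMu3 [FiniteDimensional ℂ V] (hW : A.IsGradedSplitting W) (h0 : A.HasMaxNilindexAt 0 3)
    (h1 : A.HasMaxNilindexAt 1 2) (hXY : A.bk X Y = -A.bk Y X) (hYY : A.bk Y Y = A.bk X X)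
    (hYY2 : A.bk Y (A.bk Y X) = A.bk (A.bk X X) X) (hY2Y : A.bk (A.bk Y X) Y = 0) :
    LawMu3 A := by
  refine ⟨_, _, hW.isAdaptedBasis h0 h1 hp.W_stdEvenBasis hp.W_stdOddBasis,
    hp.bk_stdEvenBasis hW h0.C_eq_bot, ?_, hp.bk_stdOddBasis_stdEvenBasis hW h1.C_eq_bot, ?_⟩
  · refine hW.forall_bk_eq_of_low_degree hp.stdEvenBasis_mem hp.stdOddBasis_mem h1.C_eq_bot
      (fun i j _ _ hij => if_neg (by omega)) fun i j hi hj hij => ?_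
    obtain ⟨rfl, rfl⟩ : i = 1 ∧ j = 1 := by omega
    simpa [stdEvenBasis, stdOddBasis] using hXY
  · refine hW.forall_bk_eq_of_low_degree hp.stdOddBasis_mem hp.stdOddBasis_mem h0.C_eq_bot
      (fun i j _ _ hij => by rw [if_neg (by omega), if_neg (by omega)]) fun i j hi hj hij => ?_
    obtain ⟨rfl, rfl⟩ | ⟨rfl, rfl⟩ | ⟨rfl, rfl⟩ :
        (i = 1 ∧ j = 1) ∨ (i = 1 ∧ j = 2) ∨ (i = 2 ∧ j = 1) := by omega
    all_goals simp [stdEvenBasis, stdOddBasis, hYY, hYY2, hY2Y]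

end IsStandardPair

namespace IsGradedSplitting

variable {A} {W : ZMod 2 → ℕ → Submodule ℂ V} (hW : A.IsGradedSplitting W)
include hW

theorem isStandardPair [FiniteDimensional ℂ V] {n : ℕ} (h0 : A.HasMaxNilindexAt 0 n)
    (h1 : A.HasMaxNilindexAt 1 2) (hn : 3 ≤ n) {X Y : V} (hX : X ∈ W 0 1) (hX0 : X ≠ 0)
    (hY : Y ∈ W 1 1) (hY0 : Y ≠ 0) : A.IsStandardPair W X Y := by
  have hW01 := hW.W_eq_span_of_mem h0 (k := 0) (by omega) hX hX0
  have hX2 := hW.bk_mem_W_succ hX hX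
  have hX20 := hW.bk_ne_zero h0.C_eq_bot h0 hW01 (k := 0) (by omega) hX hX0
  have hX3 := hW.bk_mem_W_succ hX2 hX
  have hX30 := hW.bk_ne_zero h0.C_eq_bot h0 hW01 (k := 1) (by omega) hX2 hX20
  have hY2 := hW.bk_mem_W_succ hY hX
  have hY20 := hW.bk_ne_zero h0.C_eq_bot h1 hW01 (k := 0) le_rfl hY hY0
  exact ⟨hW01, hW.W_eq_span_of_mem h0 (k := 1) (by omega) hX2 hX20,
    hW.W_eq_span_of_mem h0 (k := 2) (by omega) hX3 hX30, hW.W_eq_span_of_mem h1 (k := 0)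
    (by omega) hY hY0, hW.W_eq_span_of_mem h1 (k := 1) (by omega) hY2 hY20, hX30⟩

theorem nilindex_eq_three [FiniteDimensional ℂ V] {n : ℕ} (h0 : A.HasMaxNilindexAt 0 n)
    (h1 : A.HasMaxNilindexAt 1 2) (hn : 3 ≤ n) (hnd : A.NonDegenerate) : n = 3 := by
  by_contra hn3
  obtain ⟨X, hX, hX0⟩ := hW.exists_mem_W_ne_zero h0 (k := 0) (by omega)
  obtain ⟨Y, hY, hY0⟩ := hW.exists_mem_W_ne_zero h1 (k := 0) (by omega)
  have hp := hW.isStandardPair h0 h1 hn hX hX0 hY hY0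
  obtain ⟨b, e, f, g, hb, he, hf, hg, r1, -, r3⟩ := hp.exists_structure_constants hW
  have hX3 : A.bk (A.bk X X) X ∈ W 0 3 := hp.W_even_three ▸ Submodule.mem_span_singleton_self _
  have hX4 := hW.bk_mem_W_succ hX3 hX
  have hX40 := hW.bk_ne_zero h0.C_eq_bot h0 hp.W_even_one (k := 2) (by omega) hX3
    hp.bk_bk_ne_zero
  have hYX : A.bk Y X ∈ W 1 2 := hW.bk_mem_W_succ hY hX
  obtain ⟨q, hq⟩ := Submodule.mem_span_singleton.1
    (hW.W_eq_span_of_mem h0 (k := 3) (by omega) hX4 hX40 ▸ hW.bk_mem 1 1 2 2 _ hYX _ hYX)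
  obtain ⟨r4, r5, r6⟩ := A.relations_in_degree_four (hW.W_le_g 0 0 hX) (hW.W_le_g 1 0 hY)
    hb hf hg (hW.bk_eq_zero hYX hX h1.C_eq_bot (by omega)) hq.symm hX40
  have hg0 : g = 0 := by linear_combination r5 - b * r4 - r3
  have hq0 : q = 0 := r4.trans hg0
  have hf0 : f = 0 := r6.trans hq0
  have he0 : e = 0 := by linear_combination hg0 - r1 + hf0
  simpa [he, hf, hg, ← hq, he0, hf0, hg0, hq0] using
    hnd.bk_ne_zero_of_g_one_eq (hp.g_one_eq hW h1.C_eq_bot)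

theorem exists_isStandardPair_bk_self_eq [FiniteDimensional ℂ V] (h0 : A.HasMaxNilindexAt 0 3)
    (h1 : A.HasMaxNilindexAt 1 2) (hnd : A.NonDegenerate) :
    ∃ X Y : V, A.IsStandardPair W X Y ∧ A.bk Y Y = A.bk X X := by
  obtain ⟨X, hX, hX0⟩ := hW.exists_mem_W_ne_zero h0 (k := 0) (by omega)
  obtain ⟨Y, hY, hY0⟩ := hW.exists_mem_W_ne_zero h1 (k := 0) (by omega)
  have hp := hW.isStandardPair h0 h1 le_rfl hX hX0 hY hY0
  obtain ⟨b, e, f, g, -, he, hf, hg, r1, r2, r3⟩ := hp.exists_structure_constants hW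
  have he0 : e ≠ 0 := by
    intro hez
    have hg0 : g = 0 := by linear_combination -r2 + b * r1 - r3 + (1 + b) * hez
    have hf0 : f = 0 := by linear_combination r1 + hez - hg0
    have hYX : A.bk Y X ∈ W 1 2 := hW.bk_mem_W_succ hY hX
    simpa [he, hf, hg, hez, hf0, hg0, hW.bk_eq_zero hYX hYX h0.C_eq_bot (by omega)] using
      hnd.bk_ne_zero_of_g_one_eq (hp.g_one_eq hW h1.C_eq_bot)
  obtain ⟨t, ht⟩ := IsAlgClosed.exists_pow_nat_eq e⁻¹ two_pos
  have ht0 : t ≠ 0 := by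
    rintro rfl
    exact he0 (by simpa using ht.symm)
  refine ⟨X, t • Y, hp.smul ht0, ?_⟩
  simp only [map_smul, LinearMap.smul_apply, he, smul_smul]
  rw [← mul_assoc, ← sq, ht, inv_mul_cancel₀ he0, one_smul]

theorem lawMu2_or_lawMu3 [FiniteDimensional ℂ V] (h0 : A.HasMaxNilindexAt 0 3)
    (h1 : A.HasMaxNilindexAt 1 2) (hnd : A.NonDegenerate) : LawMu2 A ∨ LawMu3 A := by
  obtain ⟨X, Y, hp, hYY⟩ := hW.exists_isStandardPair_bk_self_eq h0 h1 hnd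
  obtain ⟨b, e, f, g, hb, he, hf, hg, r1, r2, r3⟩ := hp.exists_structure_constants hW
  have hX2 : A.bk X X ≠ 0 := fun h => hp.bk_bk_ne_zero (by rw [h, LinearMap.map_zero₂])
  have he1 : e = 1 := smul_left_injective ℂ hX2 (by simp only [← he, hYY, one_smul])
  rcases eq_or_ne b 0 with hb0 | hb0
  · have hg1 : g = 1 := by linear_combination -r2 + he1 + f * hb0
    have hf0 : f = 0 := by linear_combination r1 + he1 - hg1
    left
    exact hp.lawMu2 hW h0 h1 (by simp [hb, hb0]) hYY (by simp [hf, hf0]) (by simp [hg, hg1])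
  · have hg0 : g = 0 := (mul_eq_zero.1 r3).resolve_left hb0
    have hf1 : f = 1 := by linear_combination r1 + he1 - hg0
    have hbm : b = -1 := by linear_combination r2 - b * hf1 + hg0 - he1
    right
    exact hp.lawMu3 hW h0 h1 (by simp [hb, hbm]) hYY (by simp [hf, hf1]) (by simp [hg, hg0])

end IsGradedSplitting

namespace IsAdaptedBasis

variable {A} [FiniteDimensional ℂ V] {n m : ℕ} {X Y : ℕ → V} (hb : A.IsAdaptedBasis n m X Y)
include hb

theorem g_zero_eq (h : Module.finrank ℂ (A.g 0) = n) :
    A.g 0 = Submodule.span ℂ (Set.range fun i : Fin n => X (i.val + 1)) :=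
  ((hb.2.2.1.comp Sum.inl Sum.inl_injective).span_range_eq_of_finrank_eq
    (fun i => hb.1 _ (by omega) (by omega)) (by simpa using h)).symm

theorem g_one_eq (h : Module.finrank ℂ (A.g 1) = m) :
    A.g 1 = Submodule.span ℂ (Set.range fun j : Fin m => Y (j.val + 1)) :=
  ((hb.2.2.1.comp Sum.inr Sum.inr_injective).span_range_eq_of_finrank_eq
    (fun j => hb.2.1 _ (by omega) (by omega)) (by simpa using h)).symm

end IsAdaptedBasis

end LeibnizSuperAlg

theorem LawMu2.bk_eq_zero {V : Type*} [AddCommGroup V] [Module ℂ V] [FiniteDimensional ℂ V]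
    {A : LeibnizSuperAlg V} (h : LawMu2 A) (h0 : Module.finrank ℂ (A.g 0) = 3)
    (h1 : Module.finrank ℂ (A.g 1) = 2) {x y : V} (hx : x ∈ A.g 0) (hy : y ∈ A.g 1) :
    A.bk x y = 0 := by
  obtain ⟨X, Y, hb, -, hXY, -, -⟩ := h
  rw [hb.g_zero_eq h0] at hx
  rw [hb.g_one_eq h1] at hy
  refine A.bk_eq_zero_of_mem_span ?_ hx hy
  rintro _ ⟨i, rfl⟩ _ ⟨j, rfl⟩
  exact hXY _ _ (by omega) (by omega) (by omega) (by omega)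

theorem not_lawMu2_and_lawMu3 {V : Type*} [AddCommGroup V] [Module ℂ V] [FiniteDimensional ℂ V]
    {A : LeibnizSuperAlg V} (h0 : Module.finrank ℂ (A.g 0) = 3)
    (h1 : Module.finrank ℂ (A.g 1) = 2) : ¬(LawMu2 A ∧ LawMu3 A) := by
  rintro ⟨h2, X, Y, hb, -, hXY, -, -⟩
  have hY2 : Y 2 ≠ 0 := by simpa using hb.2.2.1.ne_zero (Sum.inr 1)
  have := h2.bk_eq_zero h0 h1 (hb.1 1 le_rfl (by norm_num)) (hb.2.1 1 le_rfl (by norm_num))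
  rw [hXY 1 1 le_rfl (by norm_num) le_rfl (by norm_num)] at this
  exact hY2 (by simpa using this)

/-- For `n ≥ 3`, a non-degenerate naturally graded Leibniz superalgebra of
super-nilindex `(n,2)` exists only for `n = 3`, and it is isomorphic to exactly
one of the two non-isomorphic superalgebras `μ₂`, `μ₃`. -/
theorem stmt12 {V : Type*} [AddCommGroup V] [Module ℂ V] [FiniteDimensional ℂ V] (A : LeibnizSuperAlg V) (n : ℕ) (hn : 3 ≤ n)
    (h : A.HasMaxSNilindex n 2) (hnd : A.NonDegenerate) (hng : A.NaturallyGraded) :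
    n = 3 ∧ (LawMu2 A ∨ LawMu3 A) ∧ ¬(LawMu2 A ∧ LawMu3 A) := by
  obtain ⟨W, hW⟩ := hng.exists_isGradedSplitting
  obtain rfl := hW.nilindex_eq_three h.even h.odd hn hnd
  exact ⟨rfl, hW.lawMu2_or_lawMu3 h.even h.odd hnd,
    not_lawMu2_and_lawMu3 h.even.finrank_eq h.odd.finrank_eq⟩
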